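/- arXiv:1105.0605 — 4 statements merged into one kernel-verified Lean document; each statement's English description precedes it below -/
import Mathlib

section
/- Let (A_n)_{n≥0} be a sequence of matrices in GL(2,ℂ) with products A⁽ⁿ⁾ = A_{n−1}⋯A_1A_0, and define g(n,[v]) = |det A⁽ⁿ⁾|/‖A⁽ⁿ⁾v‖² for unit vectors v ∈ ℂ². Suppose there exist C > 0 and λ > 1 and two unit vectors u₁, u₂ spanning distinct complex lines such that g(n,[u_i]) ≥ Cλⁿ for all n ≥ 0 and i = 1,2. Then a contradiction follows; i.e., there can be at most one projective direction ξ with g(n,ξ) ≥ Cλⁿ for all n ≥ 0. -/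
/-!
For `x y ∈ ℂ²` the multiplier `g(M, x) = |det M| / ‖M x‖²` satisfies
`g(M, x) g(M, y) |det(x, y)|² ≤ 1`, since `|det M| |det(x, y)| = |det(M x, M y)| ≤ ‖M x‖ ‖M y‖`
(Hadamard's inequality in dimension two). For independent `u₁, u₂` the hypotheses therefore give
`(C λⁿ)² |det(u₁, u₂)|² ≤ 1` for every `n`, which fails for large `n`.
-/

noncomputable def toE (v : Fin 2 → ℂ) : EuclideanSpace ℂ (Fin 2) := WithLp.toLp 2 v

/-- Products of the sequence of matrices: `A⁽ⁿ⁾ = A_{n−1} ⋯ A_1 A_0`. -/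
noncomputable def prodSeq (A : ℕ → Matrix (Fin 2) (Fin 2) ℂ) : ℕ → Matrix (Fin 2) (Fin 2) ℂ
  | 0 => 1
  | n + 1 => A n * prodSeq A n

open Matrix

lemma norm_toE_sq (v : Fin 2 → ℂ) : ‖toE v‖ ^ 2 = ‖v 0‖ ^ 2 + ‖v 1‖ ^ 2 := by
  simp [EuclideanSpace.norm_sq_eq, Fin.sum_univ_two, toE]

lemma det_of_mulVec_mulVec {R : Type*} [CommRing R] (M : Matrix (Fin 2) (Fin 2) R)
    (x y : Fin 2 → R) : (of ![M *ᵥ x, M *ᵥ y]).det = M.det * (of ![x, y]).det := by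
  simp only [det_fin_two, of_apply, mulVec, dotProduct, Fin.sum_univ_two, cons_val_zero,
    cons_val_one]
  ring

lemma norm_det_of_le_mul_norm (x y : Fin 2 → ℂ) :
    ‖(of ![x, y]).det‖ ≤ ‖toE x‖ * ‖toE y‖ := by
  have hx := norm_toE_sq x
  have hy := norm_toE_sq y
  calc ‖(of ![x, y]).det‖ = ‖x 0 * y 1 - x 1 * y 0‖ := by simp [det_fin_two]
    _ ≤ ‖x 0‖ * ‖y 1‖ + ‖x 1‖ * ‖y 0‖ := by
      simpa only [norm_mul] using norm_sub_le (x 0 * y 1) (x 1 * y 0)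
    _ ≤ ‖toE x‖ * ‖toE y‖ := by
      nlinarith [sq_nonneg (‖x 0‖ * ‖y 0‖ - ‖x 1‖ * ‖y 1‖),
        sq_nonneg (‖x 0‖ * ‖y 1‖ + ‖x 1‖ * ‖y 0‖ - ‖toE x‖ * ‖toE y‖),
        mul_nonneg (norm_nonneg (toE x)) (norm_nonneg (toE y))]

lemma det_of_ne_zero_of_forall_smul_ne {K : Type*} [Field K] {x y : Fin 2 → K} (hx : x ≠ 0)
    (hxy : ∀ a : K, a • x ≠ y) : (of ![x, y]).det ≠ 0 := by
  have hrows : LinearIndependent K (of ![x, y]).row := (LinearIndependent.pair_iff' hx).2 hxy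
  exact ((isUnit_iff_isUnit_det _).1 (linearIndependent_rows_iff_isUnit.1 hrows)).ne_zero

noncomputable def multiplier (M : Matrix (Fin 2) (Fin 2) ℂ) (v : Fin 2 → ℂ) : ℝ :=
  ‖M.det‖ / ‖toE (M *ᵥ v)‖ ^ 2

lemma multiplier_nonneg (M : Matrix (Fin 2) (Fin 2) ℂ) (v : Fin 2 → ℂ) :
    0 ≤ multiplier M v := by
  unfold multiplier
  positivity

lemma multiplier_mul_multiplier_mul_sq_le_one (M : Matrix (Fin 2) (Fin 2) ℂ) (x y : Fin 2 → ℂ) :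
    multiplier M x * multiplier M y * ‖(of ![x, y]).det‖ ^ 2 ≤ 1 := by
  have harea : ‖M.det‖ * ‖(of ![x, y]).det‖ ≤ ‖toE (M *ᵥ x)‖ * ‖toE (M *ᵥ y)‖ := by
    simpa only [det_of_mulVec_mulVec, norm_mul] using norm_det_of_le_mul_norm (M *ᵥ x) (M *ᵥ y)
  calc multiplier M x * multiplier M y * ‖(of ![x, y]).det‖ ^ 2
      = (‖M.det‖ * ‖(of ![x, y]).det‖) ^ 2 / (‖toE (M *ᵥ x)‖ * ‖toE (M *ᵥ y)‖) ^ 2 := by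
        simp only [multiplier]
        ring
    _ ≤ 1 := div_le_one_of_le₀ (pow_le_pow_left₀ (by positivity) harea 2) (by positivity)

theorem unique_expanded_direction_general (A : ℕ → Matrix (Fin 2) (Fin 2) ℂ)
    (C lam : ℝ) (hC : 0 < C) (hlam : 1 < lam)
    (u₁ u₂ : EuclideanSpace ℂ (Fin 2)) (hu₁ : ‖u₁‖ = 1)
    (hlines : ¬ ∃ c : ℂ, u₂ = c • u₁)
    (hg₁ : ∀ n : ℕ, ‖(prodSeq A n).det‖ / ‖toE ((prodSeq A n).mulVec u₁)‖ ^ 2 ≥ C * lam ^ n)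
    (hg₂ : ∀ n : ℕ, ‖(prodSeq A n).det‖ / ‖toE ((prodSeq A n).mulVec u₂)‖ ^ 2 ≥ C * lam ^ n) :
    False := by
  set D := ‖(of ![⇑u₁, ⇑u₂]).det‖
  have hD : 0 < D := by
    refine norm_pos_iff.2 (det_of_ne_zero_of_forall_smul_ne ?_
      fun c hc => hlines ⟨c, WithLp.ofLp_injective 2 hc.symm⟩)
    intro h
    simp [WithLp.ofLp_injective 2 (h.trans (WithLp.ofLp_zero 2).symm)] at hu₁
  have hbound (n : ℕ) : (C * lam ^ n * D) ^ 2 ≤ 1 :=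
    calc (C * lam ^ n * D) ^ 2 = C * lam ^ n * (C * lam ^ n) * D ^ 2 := by ring
      _ ≤ multiplier (prodSeq A n) u₁ * multiplier (prodSeq A n) u₂ * D ^ 2 := by
        gcongr
        exacts [multiplier_nonneg _ _, hg₁ n, hg₂ n]
      _ ≤ 1 := multiplier_mul_multiplier_mul_sq_le_one _ _ _
  obtain ⟨n, hn⟩ := pow_unbounded_of_one_lt (1 / (C * D)) hlam
  rw [div_lt_iff₀ (by positivity)] at hn
  nlinarith [hbound n, pow_pos (zero_lt_one.trans hlam) n]

/-- If `(A_n)` are invertible matrices with products `A⁽ⁿ⁾`, and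
`g(n,[v]) = |det A⁽ⁿ⁾|/‖A⁽ⁿ⁾v‖²`, then there cannot exist `C > 0`, `λ > 1` and two
unit vectors `u₁, u₂` spanning distinct complex lines with `g(n,[u_i]) ≥ Cλⁿ` for all
`n ≥ 0` and `i = 1,2`. -/
theorem unique_expanded_direction (A : ℕ → Matrix (Fin 2) (Fin 2) ℂ)
    (hA : ∀ n, (A n).det ≠ 0) (C lam : ℝ) (hC : 0 < C) (hlam : 1 < lam)
    (u₁ u₂ : EuclideanSpace ℂ (Fin 2)) (hu₁ : ‖u₁‖ = 1) (hu₂ : ‖u₂‖ = 1)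
    (hlines : ¬ ∃ c : ℂ, u₂ = c • u₁)
    (hg₁ : ∀ n : ℕ, ‖(prodSeq A n).det‖ / ‖toE ((prodSeq A n).mulVec u₁)‖ ^ 2 ≥ C * lam ^ n)
    (hg₂ : ∀ n : ℕ, ‖(prodSeq A n).det‖ / ‖toE ((prodSeq A n).mulVec u₂)‖ ^ 2 ≥ C * lam ^ n) :
    False :=
  unique_expanded_direction_general A C lam hC hlam u₁ u₂ hu₁ hlines hg₁ hg₂
end

section
/- (Pliss Lemma, hyperbolic-times corollary) Given 0 < γ₁ < γ₀ and a > 1, there exist N₀ ∈ ℕ and δ₀ > 0 such that: for every finite sequence (a_l)_{l=0}^{n−1} of reals with n > N₀, a⁻¹ < a_l < a for all l, and ∏_{l=0}^{n−1} a_l ≥ γ₀ⁿ, the set Ht = { 0 ≤ k < n : ∀ s with k < s < n, ∏_{l=k+1}^{s} a_l ≥ γ₁^{s−k} } has cardinality at least n·δ₀. -/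
/-!
Pass to logarithms: with `b l = log a_l - log γ₁` and partial sums `T k = ∑_{l ≤ k} b l`, a time
`k` is hyperbolic exactly when `T k ≤ T s` for all `k < s < n`. Such future minima drive the growth
of `T`: from a time that is not one, `T` drops to a later time, and from one it rises by at most
`A ≥ sup b` in a step. Hence `c n ≤ T (n - 1) ≤ A (#Ht + 1)` with `c = log γ₀ - log γ₁ > 0`, and
`#Ht ≥ c n / (2 A)` once `n ≥ 2 A / c`.
-/

open Finset Real
open scoped Classical

noncomputable def futureMinTimes (f : ℕ → ℝ) (m n : ℕ) : Finset ℕ :=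
  (Ico m n).filter fun k => ∀ j ∈ Ioc k n, f k ≤ f j

theorem sub_le_mul_card_futureMinTimes {f : ℕ → ℝ} {A : ℝ} (hA : 0 ≤ A) {m n : ℕ}
    (hmn : m ≤ n) (hf : ∀ k ∈ Ico m n, f (k + 1) - f k ≤ A) :
    f n - f m ≤ A * #(futureMinTimes f m n) := by
  obtain rfl | hlt := hmn.eq_or_lt
  · simp [futureMinTimes]
  by_cases hmin : ∀ j ∈ Ioc m n, f m ≤ f j
  · have ih := sub_le_mul_card_futureMinTimes hA hlt fun k hk =>
      hf k (Ico_subset_Ico_left m.le_succ hk)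
    have hinsert : insert m (futureMinTimes f (m + 1) n) ⊆ futureMinTimes f m n := by
      refine insert_subset (mem_filter.2 ⟨mem_Ico.2 ⟨le_rfl, hlt⟩, hmin⟩) ?_
      exact filter_subset_filter _ (Ico_subset_Ico_left m.le_succ)
    have hcard := card_le_card hinsert
    rw [card_insert_of_notMem (by simp [futureMinTimes])] at hcard
    have hstep := hf m (mem_Ico.2 ⟨le_rfl, hlt⟩)
    have : A * (#(futureMinTimes f (m + 1) n) + 1) ≤ A * #(futureMinTimes f m n) :=
      mul_le_mul_of_nonneg_left (by exact_mod_cast hcard) hA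
    linarith
  · push Not at hmin
    obtain ⟨j, hj, hfj⟩ := hmin
    obtain ⟨hmj, hjn⟩ := mem_Ioc.1 hj
    have ih := sub_le_mul_card_futureMinTimes hA hjn fun k hk =>
      hf k (Ico_subset_Ico_left hmj.le hk)
    have hcard : #(futureMinTimes f j n) ≤ #(futureMinTimes f m n) :=
      card_le_card (filter_subset_filter _ (Ico_subset_Ico_left hmj.le))
    have : A * #(futureMinTimes f j n) ≤ A * #(futureMinTimes f m n) :=
      mul_le_mul_of_nonneg_left (by exact_mod_cast hcard) hA
    linarith
termination_by n - m

theorem le_mul_card_nonneg_block_sums_add_one {b : ℕ → ℝ} {A c : ℝ} {n : ℕ} (hA : 0 ≤ A)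
    (hn : 0 < n) (hb : ∀ l < n, b l ≤ A) (hsum : c * n ≤ ∑ l ∈ range n, b l) :
    c * n ≤ A * (#((range n).filter fun k =>
      ∀ s, k < s → s < n → 0 ≤ ∑ l ∈ Icc (k + 1) s, b l) + 1) := by
  set T : ℕ → ℝ := fun k => ∑ l ∈ range (k + 1), b l
  have hblock : ∀ k s, k ≤ s → ∑ l ∈ Icc (k + 1) s, b l = T s - T k := fun k s hks => by
    rw [← Ico_add_one_right_eq_Icc, sum_Ico_eq_sub _ (by omega)]
  have hcount := sub_le_mul_card_futureMinTimes (f := T) hA (Nat.zero_le (n - 1)) fun k hk => by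
    simp only [T, sum_range_succ _ (k + 1)]
    linarith [hb (k + 1) (by rw [mem_Ico] at hk; omega)]
  have hsub : futureMinTimes T 0 (n - 1) ⊆ (range n).filter fun k =>
      ∀ s, k < s → s < n → 0 ≤ ∑ l ∈ Icc (k + 1) s, b l := by
    intro k hk
    simp only [futureMinTimes, mem_filter, mem_Ico, mem_Ioc] at hk
    refine mem_filter.2 ⟨mem_range.2 (by omega), fun s hks hsn => ?_⟩
    rw [hblock k s hks.le, sub_nonneg]
    exact hk.2 s ⟨hks, by omega⟩
  have hTn : T (n - 1) = ∑ l ∈ range n, b l := by simp only [T, Nat.sub_add_cancel hn]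
  have hT0 : T 0 ≤ A := by simpa [T] using hb 0 hn
  have : A * #(futureMinTimes T 0 (n - 1)) ≤ A * #((range n).filter fun k =>
      ∀ s, k < s → s < n → 0 ≤ ∑ l ∈ Icc (k + 1) s, b l) :=
    mul_le_mul_of_nonneg_left (by exact_mod_cast card_le_card hsub) hA
  linarith

theorem pow_card_le_prod_iff {ι : Type*} (t : Finset ι) {x : ι → ℝ} {γ : ℝ} (hγ : 0 < γ)
    (hx : ∀ i ∈ t, 0 < x i) :
    γ ^ #t ≤ ∏ i ∈ t, x i ↔ 0 ≤ ∑ i ∈ t, (log (x i) - log γ) := by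
  rw [← log_le_log_iff (pow_pos hγ _) (prod_pos hx), log_pow, log_prod fun i hi => (hx i hi).ne',
    sum_sub_distrib, sum_const, nsmul_eq_mul, sub_nonneg]

theorem pow_sub_le_prod_Icc_iff {x : ℕ → ℝ} {γ : ℝ} (hγ : 0 < γ) {k s : ℕ}
    (hx : ∀ l ∈ Icc (k + 1) s, 0 < x l) :
    γ ^ (s - k) ≤ ∏ l ∈ Icc (k + 1) s, x l ↔ 0 ≤ ∑ l ∈ Icc (k + 1) s, (log (x l) - log γ) := by
  rw [← pow_card_le_prod_iff _ hγ hx, Nat.card_Icc, Nat.add_sub_add_right]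

/-- **Pliss Lemma.** Given `0 < γ₁ < γ₀` and `a > 1`, there exist
`N₀ ∈ ℕ` and `δ₀ > 0` such that for every finite sequence `(a_l)_{l=0}^{n−1}` with
`n > N₀`, `a⁻¹ < a_l < a` and `∏_{l<n} a_l ≥ γ₀ⁿ`, the set of hyperbolic times
`Ht = {0 ≤ k < n : ∀ k < s < n, ∏_{l=k+1}^{s} a_l ≥ γ₁^{s−k}}` has cardinality
at least `n·δ₀`. -/
theorem pliss_lemma (γ₀ γ₁ a : ℝ) (h₁ : 0 < γ₁) (h₂ : γ₁ < γ₀) (ha : 1 < a) :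
    ∃ (N₀ : ℕ) (δ₀ : ℝ), 0 < δ₀ ∧
      ∀ (n : ℕ) (aseq : ℕ → ℝ), N₀ < n →
        (∀ l < n, a⁻¹ < aseq l ∧ aseq l < a) →
        (∏ l ∈ Finset.range n, aseq l) ≥ γ₀ ^ n →
        ((Finset.range n).filter (fun k =>
            ∀ s, k < s → s < n →
              (∏ l ∈ Finset.Icc (k + 1) s, aseq l) ≥ γ₁ ^ (s - k))).card
          ≥ (n : ℝ) * δ₀ := by
  set c := log γ₀ - log γ₁
  have hc : 0 < c := sub_pos.2 (log_lt_log h₁ h₂)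
  set A := max (log a - log γ₁) 1
  have hA : 0 < A := one_pos.trans_le (le_max_right _ _)
  refine ⟨⌈2 * A / c⌉₊, c / (2 * A), by positivity, fun n aseq hn hbound hprod => ?_⟩
  have hpos : ∀ l < n, 0 < aseq l := fun l hl => (inv_pos.2 (one_pos.trans ha)).trans (hbound l hl).1
  have hHt : ((range n).filter fun k => ∀ s, k < s → s < n →
      (∏ l ∈ Icc (k + 1) s, aseq l) ≥ γ₁ ^ (s - k)) = (range n).filter fun k =>
      ∀ s, k < s → s < n → 0 ≤ ∑ l ∈ Icc (k + 1) s, (log (aseq l) - log γ₁) :=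
    filter_congr fun k _ => forall_congr' fun s => forall_congr' fun _ => forall_congr' fun hsn =>
      pow_sub_le_prod_Icc_iff h₁ fun l hl => hpos l ((mem_Icc.1 hl).2.trans_lt hsn)
  have hsum : c * n ≤ ∑ l ∈ range n, (log (aseq l) - log γ₁) := by
    have := (pow_card_le_prod_iff (range n) (h₁.trans h₂) fun l hl => hpos l (mem_range.1 hl)).1
      (by rwa [card_range])
    simp only [sum_sub_distrib, sum_const, card_range, nsmul_eq_mul] at this ⊢
    linarith
  have hcount := le_mul_card_nonneg_block_sums_add_one hA.le (by omega) (fun l hl => by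
    linarith [le_max_left (log a - log γ₁) 1, log_le_log (hpos l hl) (hbound l hl).2.le]) hsum
  have hN : 2 * A ≤ c * n := by
    have := (Nat.le_ceil (2 * A / c)).trans_lt (Nat.cast_lt.2 hn)
    rw [div_lt_iff₀ hc] at this
    linarith
  rw [hHt, ge_iff_le, mul_div_assoc', div_le_iff₀ (by positivity)]
  nlinarith
end

section
/- Let (a_n)_{n∈ℤ} be a real sequence, and suppose there exist integers n₀ ≤ 0 ≤ n₁ and reals δ₊ ≤ δ₋ < 0 such that (a) a_n − a_{n₀} ≥ (n−n₀)δ₋ for all n ≤ n₀, and (b) a_n − a_{n₁} ≥ (n−n₁)δ₊ for all n ≥ n₁. Then there exists an integer N ∈ [n₀, n₁] such that a_{N+n} − a_N ≥ n·δ₊ for all n ≥ 0 and a_{N−n} − a_N ≥ −n·δ₋ for all n ≥ 0. -/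
/-! Let `N` minimise `a n - n δ₋` over `[n₀, n₁]`. To the left of `N` this minimality is exactly
the slope-`δ₋` bound, and hypothesis (a) carries it past `n₀`. To the right, minimality for the
slope `δ₋` implies it for the smaller slope `δ₊` (as `m - N ≥ 0`), and hypothesis (b) carries it
past `n₁`. -/

open Set

section Extend

variable {ι α : Type*} [LinearOrder ι] [Preorder α] {f : ι → α} {a b : ι}

theorem IsMinOn.Ici_of_Icc (hab : a ≤ b) (hIcc : IsMinOn f (Icc a b) a)
    (hIci : IsMinOn f (Ici b) b) : IsMinOn f (Ici a) a := by
  intro m (ham : a ≤ m)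
  rcases le_total m b with hmb | hbm
  · exact hIcc ⟨ham, hmb⟩
  · exact (hIcc ⟨hab, le_rfl⟩).trans (hIci hbm)

theorem IsMinOn.Iic_of_Icc (hab : a ≤ b) (hIcc : IsMinOn f (Icc a b) b)
    (hIic : IsMinOn f (Iic a) a) : IsMinOn f (Iic b) b := by
  intro m (hmb : m ≤ b)
  rcases le_total a m with ham | hma
  · exact hIcc ⟨ham, hmb⟩
  · exact (hIcc ⟨le_rfl, hab⟩).trans (hIic hma)

end Extend

def tilt (a : ℤ → ℝ) (δ : ℝ) (n : ℤ) : ℝ := a n - n * δ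

theorem tilt_le_tilt_iff {a : ℤ → ℝ} {δ : ℝ} {m n : ℤ} :
    tilt a δ m ≤ tilt a δ n ↔ ((n - m : ℤ) : ℝ) * δ ≤ a n - a m := by
  unfold tilt
  push_cast
  constructor <;> intro h <;> linarith

theorem IsMinOn.tilt_of_le {a : ℤ → ℝ} {δ δ' : ℝ} {s : Set ℤ} {N : ℤ} (hs : s ⊆ Ici N)
    (hmin : IsMinOn (tilt a δ) s N) (hδ : δ' ≤ δ) : IsMinOn (tilt a δ') s N := by
  intro m hm
  have hNm : (N : ℝ) ≤ m := by exact_mod_cast hs hm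
  have : tilt a δ N ≤ tilt a δ m := hmin hm
  change tilt a δ' N ≤ tilt a δ' m
  have hslope := mul_nonneg (sub_nonneg.2 hNm) (sub_nonneg.2 hδ)
  unfold tilt at *
  linarith

theorem sublemma_sequence_general (a : ℤ → ℝ) (n₀ n₁ : ℤ) (hn₀ : n₀ ≤ 0) (hn₁ : 0 ≤ n₁)
    (δp δm : ℝ) (hδ : δp ≤ δm)
    (ha : ∀ n : ℤ, n ≤ n₀ → a n - a n₀ ≥ ((n - n₀ : ℤ) : ℝ) * δm)
    (hb : ∀ n : ℤ, n₁ ≤ n → a n - a n₁ ≥ ((n - n₁ : ℤ) : ℝ) * δp) :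
    ∃ N : ℤ, n₀ ≤ N ∧ N ≤ n₁ ∧
      (∀ n : ℕ, a (N + n) - a N ≥ (n : ℝ) * δp) ∧
      (∀ n : ℕ, a (N - n) - a N ≥ -(n : ℝ) * δm) := by
  obtain ⟨N, ⟨hn₀N, hNn₁⟩, hmin⟩ :=
    exists_min_image (Icc n₀ n₁) (tilt a δm) (finite_Icc n₀ n₁) ⟨0, hn₀, hn₁⟩
  have hmin : IsMinOn (tilt a δm) (Icc n₀ n₁) N := hmin
  have hleft : IsMinOn (tilt a δm) (Iic N) N :=
    (hmin.on_subset (Icc_subset_Icc_right hNn₁)).Iic_of_Icc hn₀N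
      fun m hm => tilt_le_tilt_iff.2 (ha m hm)
  have hright : IsMinOn (tilt a δp) (Ici N) N :=
    ((hmin.on_subset (Icc_subset_Icc_left hn₀N)).tilt_of_le (fun _ hm => hm.1) hδ).Ici_of_Icc
      hNn₁ fun m hm => tilt_le_tilt_iff.2 (hb m hm)
  refine ⟨N, hn₀N, hNn₁, fun n => ?_, fun n => ?_⟩
  · have := tilt_le_tilt_iff.1 (hright (show N ≤ N + n by omega))
    push_cast at this
    linarith
  · have := tilt_le_tilt_iff.1 (hleft (show N - n ≤ N by omega))
    push_cast at this
    linarith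

/-- Let `(a_n)_{n∈ℤ}` be a real sequence, `n₀ ≤ 0 ≤ n₁` integers and
`δ₊ ≤ δ₋ < 0` reals, with `a_n − a_{n₀} ≥ (n−n₀)δ₋` for all `n ≤ n₀` and
`a_n − a_{n₁} ≥ (n−n₁)δ₊` for all `n ≥ n₁`.  Then there is an integer `N ∈ [n₀,n₁]`
with `a_{N+n} − a_N ≥ n·δ₊` and `a_{N−n} − a_N ≥ −n·δ₋` for all `n ≥ 0`. -/
theorem sublemma_sequence (a : ℤ → ℝ) (n₀ n₁ : ℤ) (hn₀ : n₀ ≤ 0) (hn₁ : 0 ≤ n₁)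
    (δp δm : ℝ) (hδ : δp ≤ δm) (hδm : δm < 0)
    (ha : ∀ n : ℤ, n ≤ n₀ → a n - a n₀ ≥ ((n - n₀ : ℤ) : ℝ) * δm)
    (hb : ∀ n : ℤ, n₁ ≤ n → a n - a n₁ ≥ ((n - n₁ : ℤ) : ℝ) * δp) :
    ∃ N : ℤ, n₀ ≤ N ∧ N ≤ n₁ ∧
      (∀ n : ℕ, a (N + n) - a N ≥ (n : ℝ) * δp) ∧
      (∀ n : ℕ, a (N - n) - a N ≥ -(n : ℝ) * δm) :=
  sublemma_sequence_general a n₀ n₁ hn₀ hn₁ δp δm hδ ha hb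
end

section
/- Let X be a compact metric space, f : X → X a homeomorphism, and g : ℤ × Ξ → ℝ₊ a multiplicative cocycle over a projective cocycle M (so g(n+m,ξ) = g(n, Mⁿξ)·g(m,ξ)). Suppose ξ is a direction at x with g(±n, M^{n_±}ξ) ≥ β_±^{±n} for all n ≥ 0, where 0 < β₊ ≤ β₋ < 1 and n₋ ≤ 0 ≤ n₁ = n₊. Then there exists an integer N with n₋ ≤ N ≤ n₊ such that g(±n, M^{N}ξ) ≥ β_±^{±n} for all n ≥ 0. -/
/-!
Pass to `a k = log g(k, ξ)`; the cocycle identity turns criticality of `Mᴺξ` into the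
linear bounds `a k - a N ≥ (k - N) log β₊` for `k ≥ N` and `a k - a N ≥ (k - N) log β₋`
for `k ≤ N`. A minimiser `N` of `a k - k log β₊` over `[n₋, n₊]` has the first bound
inside the window, hence also the second there since `log β₊ ≤ log β₋`. Outside the
window one chains through `n₊` (resp. `n₋`) and uses the bounds assumed there.
-/

open Real

section Criticality

variable {α : Type*} [CommRing α] [LinearOrder α]

def FutureCritical (a : ℤ → α) (δ : α) (N : ℤ) : Prop :=
  ∀ k, N ≤ k → (k - N) * δ ≤ a k - a N

def PastCritical (a : ℤ → α) (δ : α) (N : ℤ) : Prop :=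
  ∀ k, k ≤ N → (k - N) * δ ≤ a k - a N

theorem futureCritical_iff {a : ℤ → α} {δ : α} {N : ℤ} :
    FutureCritical a δ N ↔ ∀ n : ℕ, ((n : ℤ) : α) * δ ≤ a (n + N) - a N := by
  refine ⟨fun h n => by simpa using h (n + N) (by omega), fun h k hk => ?_⟩
  obtain ⟨n, hn⟩ := Int.eq_ofNat_of_zero_le (sub_nonneg.2 hk)
  simpa [← hn] using h n

theorem pastCritical_iff {a : ℤ → α} {δ : α} {N : ℤ} :
    PastCritical a δ N ↔ ∀ n : ℕ, ((-n : ℤ) : α) * δ ≤ a (-(n : ℤ) + N) - a N := by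
  refine ⟨fun h n => by simpa using h (-n + N) (by omega), fun h k hk => ?_⟩
  obtain ⟨n, hn⟩ := Int.eq_ofNat_of_zero_le (sub_nonneg.2 hk)
  simpa [show k = -(n : ℤ) + N by omega] using h n

theorem exists_critical_mem_Icc [IsStrictOrderedRing α] {a : ℤ → α} {δp δm : α} (hδ : δp ≤ δm) {nm np : ℤ}
    (hn : nm ≤ np) (hfut : FutureCritical a δp np) (hpast : PastCritical a δm nm) :
    ∃ N, nm ≤ N ∧ N ≤ np ∧ FutureCritical a δp N ∧ PastCritical a δm N := by
  obtain ⟨N, hN, hmin⟩ := (Finset.Icc nm np).exists_min_image (fun k => a k - k * δp)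
    ⟨nm, Finset.mem_Icc.2 ⟨le_rfl, hn⟩⟩
  obtain ⟨hnmN, hNnp⟩ := Finset.mem_Icc.1 hN
  have hwindow : ∀ k, nm ≤ k → k ≤ np → (k - N) * δp ≤ a k - a N := fun k h₁ h₂ => by
    have := hmin k (Finset.mem_Icc.2 ⟨h₁, h₂⟩)
    linarith
  have hslope : ∀ k ≤ N, ((k : α) - N) * δm ≤ (k - N) * δp := fun k hk =>
    mul_le_mul_of_nonpos_left hδ (sub_nonpos.2 (Int.cast_le.2 hk))
  refine ⟨N, hnmN, hNnp, fun k hk => ?_, fun k hk => ?_⟩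
  · rcases le_or_gt k np with hk' | hk'
    · exact hwindow k (hnmN.trans hk) hk'
    · have := hfut k hk'.le
      have := hwindow np hn le_rfl
      linarith
  · rcases le_or_gt nm k with hk' | hk'
    · have := hwindow k hk' (hk.trans hNnp)
      linarith [hslope k hk]
    · have := hpast k hk'.le
      have := hwindow nm le_rfl hn
      linarith [hslope nm hnmN]

end Criticality

theorem zpow_le_cocycle_iff {Ξ : Type*} {Mpow : ℤ → Ξ → Ξ} {g : ℤ → Ξ → ℝ}
    (hcoc : ∀ (n m : ℤ) (ξ : Ξ), g (n + m) ξ = g n (Mpow m ξ) * g m ξ)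
    (hpos : ∀ (n : ℤ) (ξ : Ξ), 0 < g n ξ) {β : ℝ} (hβ : 0 < β) (ξ : Ξ) (n N : ℤ) :
    β ^ n ≤ g n (Mpow N ξ) ↔ (n : ℝ) * log β ≤ log (g (n + N) ξ) - log (g N ξ) := by
  rw [hcoc, log_mul (hpos _ _).ne' (hpos _ _).ne', add_sub_cancel_right,
    ← log_zpow, log_le_log_iff (zpow_pos hβ n) (hpos _ _)]

theorem critical_at_times_gives_critical_general {Ξ : Type*}
    (Mpow : ℤ → Ξ → Ξ) (g : ℤ → Ξ → ℝ)
    (hcoc : ∀ (n m : ℤ) (ξ : Ξ), g (n + m) ξ = g n (Mpow m ξ) * g m ξ)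
    (hpos : ∀ (n : ℤ) (ξ : Ξ), 0 < g n ξ)
    (βm βp : ℝ) (h0 : 0 < βp) (h1 : βp ≤ βm)
    (nm np : ℤ) (hnm : nm ≤ 0) (hnp : 0 ≤ np) (ξ : Ξ)
    (hfut : ∀ n : ℕ, g (n : ℤ) (Mpow np ξ) ≥ βp ^ n)
    (hpast : ∀ n : ℕ, g (-(n : ℤ)) (Mpow nm ξ) ≥ βm ^ (-(n : ℤ))) :
    ∃ N : ℤ, nm ≤ N ∧ N ≤ np ∧
      (∀ n : ℕ, g (n : ℤ) (Mpow N ξ) ≥ βp ^ n) ∧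
      (∀ n : ℕ, g (-(n : ℤ)) (Mpow N ξ) ≥ βm ^ (-(n : ℤ))) := by
  have hp := zpow_le_cocycle_iff hcoc hpos h0 ξ
  have hm := zpow_le_cocycle_iff hcoc hpos (h0.trans_le h1) ξ
  obtain ⟨N, hnmN, hNnp, hF, hP⟩ :=
    exists_critical_mem_Icc (a := fun k => log (g k ξ)) (log_le_log h0 h1) (hnm.trans hnp)
      (futureCritical_iff.2 fun n => (hp n np).1 (by simpa using hfut n))
      (pastCritical_iff.2 fun n => (hm _ nm).1 (hpast n))
  refine ⟨N, hnmN, hNnp, fun n => ?_, fun n => (hm _ N).2 (pastCritical_iff.1 hP n)⟩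
  simpa using (hp n N).2 (futureCritical_iff.1 hF n)

/-- Let `g` be a positive multiplicative cocycle over the (iterates of
the) projective cocycle `M`, i.e. `g(n+m,ξ) = g(n, Mᵐξ)·g(m,ξ)`.  If `ξ` is a direction
with `g(n, M^{n₊}ξ) ≥ β₊ⁿ` and `g(−n, M^{n₋}ξ) ≥ β₋⁻ⁿ` for all `n ≥ 0`, where
`0 < β₊ ≤ β₋ < 1` and `n₋ ≤ 0 ≤ n₊`, then there is an integer `N ∈ [n₋, n₊]` such
that `g(n, M^Nξ) ≥ β₊ⁿ` and `g(−n, M^Nξ) ≥ β₋⁻ⁿ` for all `n ≥ 0`. -/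
theorem critical_at_times_gives_critical {Ξ : Type*}
    (Mpow : ℤ → Ξ → Ξ) (g : ℤ → Ξ → ℝ)
    (hMadd : ∀ (n m : ℤ) (ξ : Ξ), Mpow (n + m) ξ = Mpow n (Mpow m ξ))
    (hcoc : ∀ (n m : ℤ) (ξ : Ξ), g (n + m) ξ = g n (Mpow m ξ) * g m ξ)
    (hpos : ∀ (n : ℤ) (ξ : Ξ), 0 < g n ξ)
    (βm βp : ℝ) (h0 : 0 < βp) (h1 : βp ≤ βm) (h2 : βm < 1)
    (nm np : ℤ) (hnm : nm ≤ 0) (hnp : 0 ≤ np) (ξ : Ξ)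
    (hfut : ∀ n : ℕ, g (n : ℤ) (Mpow np ξ) ≥ βp ^ n)
    (hpast : ∀ n : ℕ, g (-(n : ℤ)) (Mpow nm ξ) ≥ βm ^ (-(n : ℤ))) :
    ∃ N : ℤ, nm ≤ N ∧ N ≤ np ∧
      (∀ n : ℕ, g (n : ℤ) (Mpow N ξ) ≥ βp ^ n) ∧
      (∀ n : ℕ, g (-(n : ℤ)) (Mpow N ξ) ≥ βm ^ (-(n : ℤ))) :=
  critical_at_times_gives_critical_general Mpow g hcoc hpos βm βp h0 h1 nm np hnm hnp ξ hfut hpast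
end
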